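/- (Sandwich Lemma) Let A be a wqo with o(A) = α + β for ordinals α, β. Then there is a partition A = A_α ⊎ A_β such that o(A_α) = α (with the order induced from A), o(A_β) = β, and no element of A_β is below any element of A_α in A (i.e., for all a ∈ A_α and b ∈ A_β, b ≤_A a fails); equivalently A_α ⊔ A_β is an augmentation-below of A and A is an augmentation-below of the lexicographic sum A_α + A_β. -/

import Mathlib

open Ordinal

universe u

/-- A preordered type is a well-quasi-order when every infinite sequence
contains an increasing pair. -/
def IsWqo (A : Type u) [Preorder A] : Prop :=
  ∀ f : ℕ → A, ∃ i j : ℕ, i < j ∧ f i ≤ f j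

/-- In the tree of finite sequences satisfying `P` (ordered by reverse prefix),
`t` is a child of `s` when `t` extends `s` by one element and satisfies `P`. -/
def ExtRel {A : Type u} (P : List A → Prop) (t s : List A) : Prop :=
  P t ∧ ∃ a : A, t = s ++ [a]

/-- The ordinal rank of the tree of finite sequences satisfying `P`, i.e. the rank of its
root (the empty sequence): the rank of a node is `0` on leaves and otherwise the supremum
of the successors of the ranks of its children.  (Junk value `0` when the tree is not
well-founded; in the statements below the wqo hypotheses guarantee well-foundedness.) -/
noncomputable def treeRank {A : Type u} (P : List A → Prop) : Ordinal.{u} :=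
  @dite _ (Acc (ExtRel P) ([] : List A)) (Classical.dec _) (fun h => h.rank) (fun _ => 0)

/-- The maximal order type `o(A)`: the rank of the tree `Bad(A)` of bad sequences. -/
noncomputable def mot (A : Type u) [Preorder A] : Ordinal.{u} :=
  treeRank (fun l : List A => l.Pairwise (fun a b => ¬ a ≤ b))

/-- The height `h(A)`: the rank of the tree `Dec(A)` of strictly decreasing sequences. -/
noncomputable def height (A : Type u) [Preorder A] : Ordinal.{u} :=
  treeRank (fun l : List A => l.Pairwise (fun a b => b < a))

/-- The width `w(A)`: the rank of the tree `Inco(A)` of sequences of pairwise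
incomparable elements. -/
noncomputable def width (A : Type u) [Preorder A] : Ordinal.{u} :=
  treeRank (fun l : List A => l.Pairwise (fun a b => ¬ a ≤ b ∧ ¬ b ≤ a))

namespace SandwichAux

/-- The badness predicate for lists. -/
def badP (X : Type u) [Preorder X] : List X → Prop :=
  fun l => l.Pairwise (fun a b => ¬ a ≤ b)

theorem mot_def (X : Type u) [Preorder X] : mot X = treeRank (badP X) := rfl

variable {X : Type u} [Preorder X]

theorem badP_nil : badP X [] := List.Pairwise.nil

/-- Simulations transfer accessibility. -/
theorem acc_of_sim {A B : Type*} {r : A → A → Prop} {r' : B → B → Prop}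
    (inv : A → B → Prop)
    (H : ∀ a b, inv a b → ∀ a', r a' a → ∃ b', r' b' b ∧ inv a' b') :
    ∀ {b : B}, Acc r' b → ∀ {a : A}, inv a b → Acc r a := by
  intro b hb
  induction hb with
  | intro b _ IH =>
    intro a hinv
    constructor
    intro a' hr
    obtain ⟨b', hb', hinv'⟩ := H a b hinv a' hr
    exact IH b' hb' hinv'

/-- Simulations bound ranks. -/
theorem rank_le_of_sim {A B : Type u} {r : A → A → Prop} {r' : B → B → Prop}
    (inv : A → B → Prop)
    (H : ∀ a b, inv a b → ∀ a', r a' a → ∃ b', r' b' b ∧ inv a' b') :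
    ∀ {b : B} (hb : Acc r' b) {a : A} (ha : Acc r a), inv a b → ha.rank ≤ hb.rank := by
  intro b hb
  induction hb with
  | intro b hb IH =>
    intro a ha hinv
    rw [ha.rank_eq]
    apply Ordinal.iSup_le_iff.2
    rintro ⟨a', hr⟩
    obtain ⟨b', hb', hinv'⟩ := H a b hinv a' hr
    have h1 : (ha.inv hr).rank ≤ (hb b' hb').rank := IH b' hb' (ha.inv hr) hinv'
    have h2 : (hb b' hb').rank < (Acc.intro b hb).rank := by
      have := (Acc.intro b hb).rank_lt_of_rel hb'
      rwa [congrArg Acc.rank (Subsingleton.elim ((Acc.intro b hb).inv hb') (hb b' hb'))] at this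
    exact Order.succ_le_of_lt (h1.trans_lt h2)

/-- A wqo has a well-founded tree of bad sequences (relative to any starting node). -/
theorem acc_bad_of_wqo (hX : IsWqo X) (l : List X) : Acc (ExtRel (badP X)) l := by
  by_contra hl
  have step : ∀ t : {l : List X // ¬ Acc (ExtRel (badP X)) l},
      ∃ a : X, badP X (t.1 ++ [a]) ∧ ¬ Acc (ExtRel (badP X)) (t.1 ++ [a]) := by
    rintro ⟨t, ht⟩
    by_contra hc
    push_neg at hc
    apply ht
    constructor
    rintro t' ⟨hP, a, rfl⟩
    exact hc a hP
  let F : ℕ → {l : List X // ¬ Acc (ExtRel (badP X)) l} := fun n =>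
    Nat.rec ⟨l, hl⟩ (fun _ t => ⟨t.1 ++ [Classical.choose (step t)],
      (Classical.choose_spec (step t)).2⟩) n
  let g : ℕ → X := fun n => Classical.choose (step (F n))
  have hbad : ∀ n : ℕ, badP X ((F (n+1)).1) := fun n => (Classical.choose_spec (step (F n))).1
  have hF : ∀ n : ℕ, (F n).1 = l ++ (List.range n).map g := by
    intro n
    induction n with
    | zero => simp [F]
    | succ n ih =>
      have : (F (n+1)).1 = (F n).1 ++ [g n] := rfl
      rw [this, ih, List.range_succ, List.map_append, List.append_assoc]
      rfl
  obtain ⟨i, j, hij, hle⟩ := hX g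
  have hb := hbad j
  rw [hF (j+1)] at hb
  have hpair : ((List.range (j+1)).map g).Pairwise (fun a b => ¬ a ≤ b) :=
    ((List.pairwise_append.1 hb).2).1
  rw [List.pairwise_map] at hpair
  rw [List.pairwise_iff_get] at hpair
  have hcon := hpair ⟨i, by simpa using Nat.lt_succ_of_lt hij⟩ ⟨j, by simp⟩ (by simpa using hij)
  simp only [List.get_eq_getElem, List.getElem_range] at hcon
  exact hcon hle

/-- Canonical rank of a node in the tree of bad sequences of a wqo. -/
noncomputable def rk (hX : IsWqo X) (t : List X) : Ordinal.{u} :=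
  (acc_bad_of_wqo hX t).rank

theorem rk_lt (hX : IsWqo X) {t t' : List X} (h : ExtRel (badP X) t' t) :
    rk hX t' < rk hX t := by
  have := (acc_bad_of_wqo hX t).rank_lt_of_rel h
  rwa [congrArg Acc.rank (Subsingleton.elim ((acc_bad_of_wqo hX t).inv h)
    (acc_bad_of_wqo hX t'))] at this

theorem rk_eq (hX : IsWqo X) (t : List X) :
    rk hX t = ⨆ t' : {t' : List X // ExtRel (badP X) t' t}, Order.succ (rk hX t'.1) := by
  rw [rk, Acc.rank_eq]
  rfl

theorem mot_eq_rk (hX : IsWqo X) : mot X = rk hX [] := by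
  rw [mot_def, treeRank, dif_pos (acc_bad_of_wqo hX [])]
  exact congrArg Acc.rank (Subsingleton.elim _ _)

theorem isWqo_subtype (hX : IsWqo X) (S : Set X) : IsWqo ↥S := by
  intro f
  obtain ⟨i, j, hij, hle⟩ := hX (fun n => (f n : X))
  exact ⟨i, j, hij, hle⟩

theorem isWqo_of_iso {Y : Type u} [Preorder Y] (hY : IsWqo Y) (e : X ≃o Y) : IsWqo X := by
  intro f
  obtain ⟨i, j, hij, hle⟩ := hY (fun n => e (f n))
  exact ⟨i, j, hij, e.le_iff_le.1 hle⟩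

theorem bad_map_val {S : Set X} {m : List ↥S} (h : badP ↥S m) :
    badP X (m.map Subtype.val) := by
  rw [badP, List.pairwise_map]; exact h

theorem bad_of_bad_map_val {S : Set X} {m : List ↥S} (h : badP X (m.map Subtype.val)) :
    badP ↥S m := by
  rwa [badP, List.pairwise_map] at h

/-- `mot` is invariant under order isomorphisms (of wqos). -/
theorem mot_congr {Y : Type u} [Preorder Y] (hY : IsWqo Y) (e : X ≃o Y) : mot X = mot Y := by
  have hX : IsWqo X := isWqo_of_iso hY e
  have dir : ∀ (W Z : Type u) (iW : Preorder W) (iZ : Preorder Z) (hW : IsWqo W) (hZ : IsWqo Z)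
      (f : W ≃o Z), mot W ≤ mot Z := by
    intro W Z iW iZ hW hZ f
    rw [mot_eq_rk hW, mot_eq_rk hZ, rk, rk]
    apply rank_le_of_sim (inv := fun (l : List W) (m : List Z) => m = l.map f)
      ?_ _ _ (by simp)
    rintro l m hinv l' ⟨hbad, x, rfl⟩
    refine ⟨(l ++ [x]).map f, ⟨?_, f x, by rw [hinv]; simp⟩, rfl⟩
    rw [badP, List.pairwise_map]
    exact hbad.imp (fun {a b} h hc => h (f.le_iff_le.1 hc))
  exact le_antisymm (dir X Y _ _ hX hY e) (dir Y X _ _ hY hX e.symm)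

end SandwichAux

namespace Ordinal

/-- Natural (Hessenberg) sum of ordinals. -/
noncomputable def nadd (a b : Ordinal.{u}) : Ordinal.{u} :=
  max (⨆ x : Set.Iio a, Order.succ (nadd x.1 b)) (⨆ x : Set.Iio b, Order.succ (nadd a x.1))
termination_by (a, b)
decreasing_by all_goals cases x; decreasing_tactic

end Ordinal

namespace NaturalOps

infixl:65 " ♯ " => Ordinal.nadd

end NaturalOps

namespace Ordinal

theorem nadd_le_iff {a b c : Ordinal.{u}} :
    b ♯ c ≤ a ↔ (∀ b' < b, b' ♯ c < a) ∧ ∀ c' < c, b ♯ c' < a := by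
  rw [nadd, max_le_iff, Ordinal.iSup_le_iff, Ordinal.iSup_le_iff]
  simp only [Order.succ_le_iff, Subtype.forall, Set.mem_Iio]

theorem nadd_lt_nadd_left {b c : Ordinal.{u}} (h : b < c) (a : Ordinal.{u}) : a ♯ b < a ♯ c :=
  lt_of_not_ge fun h' => lt_irrefl _ ((nadd_le_iff.1 h').2 b h)

theorem nadd_lt_nadd_right {b c : Ordinal.{u}} (h : b < c) (a : Ordinal.{u}) : b ♯ a < c ♯ a :=
  lt_of_not_ge fun h' => lt_irrefl _ ((nadd_le_iff.1 h').1 b h)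

theorem nadd_comm (a b : Ordinal.{u}) : a ♯ b = b ♯ a := by
  induction a using Ordinal.induction generalizing b with
  | _ a iha =>
  induction b using Ordinal.induction with
  | _ b ihb =>
  apply le_antisymm
  · rw [nadd_le_iff]
    constructor
    · intro a' h; rw [iha a' h b]; exact nadd_lt_nadd_left h b
    · intro b' h; rw [ihb b' h]; exact nadd_lt_nadd_right h a
  · rw [nadd_le_iff]
    constructor
    · intro b' h; rw [← ihb b' h]; exact nadd_lt_nadd_left h a
    · intro a' h; rw [← iha a' h b]; exact nadd_lt_nadd_right h b

theorem nadd_zero (a : Ordinal.{u}) : a ♯ 0 = a := by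
  induction a using Ordinal.induction with
  | _ a ih =>
  apply le_antisymm
  · rw [nadd_le_iff]
    exact ⟨fun a' h => by rw [ih a' h]; exact h, fun c' h => by simp at h⟩
  · apply le_of_forall_lt
    intro c hc
    rw [← ih c hc]
    exact nadd_lt_nadd_right hc 0

theorem zero_nadd (a : Ordinal.{u}) : 0 ♯ a = a := by
  rw [nadd_comm, nadd_zero]

theorem nadd_succ (a b : Ordinal.{u}) : a ♯ Order.succ b = Order.succ (a ♯ b) := by
  induction a using Ordinal.induction with
  | _ a ih =>
  apply le_antisymm
  · rw [nadd_le_iff]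
    refine ⟨fun a' h => ?_, fun c' h => ?_⟩
    · rw [ih a' h]
      exact Order.lt_succ_iff.2 (Order.succ_le_of_lt (nadd_lt_nadd_right h b))
    · rw [Order.lt_succ_iff] at h
      rcases h.lt_or_eq with h | rfl
      · exact (nadd_lt_nadd_left h a).trans (Order.lt_succ _)
      · exact Order.lt_succ _
  · exact Order.succ_le_of_lt (nadd_lt_nadd_left (Order.lt_succ b) a)

theorem nadd_nat (a : Ordinal.{u}) (n : ℕ) : a ♯ (n : Ordinal) = a + n := by
  induction n with
  | zero => simp [nadd_zero]
  | succ n ih =>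
    rw [Nat.cast_succ, add_one_eq_succ, nadd_succ, ih, ← add_one_eq_succ, ← add_one_eq_succ,
      add_assoc]

end Ordinal

namespace SandwichAux

open NaturalOps

variable {X : Type u} [Preorder X]

/-- The rank of a bad sequence `s` as a node of `Bad(X)` equals the maximal order
type of the residual `{x | ∀ a ∈ s, ¬ a ≤ x}`. -/
theorem rank_node (hX : IsWqo X) {s : List X} (hs : badP X s) :
    mot ↥{x : X | ∀ a ∈ s, ¬ a ≤ x} = rk hX s := by
  set S : Set X := {x : X | ∀ a ∈ s, ¬ a ≤ x} with hS
  have hSw : IsWqo ↥S := isWqo_subtype hX S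
  apply le_antisymm
  · rw [mot_eq_rk hSw, rk, rk]
    refine rank_le_of_sim
      (fun (m : List ↥S) (l : List X) => l = s ++ m.map Subtype.val) ?_
      (acc_bad_of_wqo hX s) (acc_bad_of_wqo hSw []) (by simp)
    rintro m l hinv m' ⟨hbad, x, rfl⟩
    refine ⟨s ++ (m ++ [x]).map Subtype.val, ⟨?_, x.val, by rw [hinv]; simp⟩, rfl⟩
    rw [badP, List.pairwise_append]
    refine ⟨hs, bad_map_val hbad, ?_⟩
    rintro a ha b hb
    rw [List.mem_map] at hb
    obtain ⟨z, _, rfl⟩ := hb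
    exact z.2 a ha
  · rw [mot_eq_rk hSw, rk, rk]
    refine rank_le_of_sim
      (fun (l : List X) (m : List ↥S) => l = s ++ m.map Subtype.val) ?_
      (acc_bad_of_wqo hSw []) (acc_bad_of_wqo hX s) (by simp)
    rintro l m hinv l' ⟨hbad, y, rfl⟩
    rw [hinv] at hbad
    have hbad' : badP X (s ++ (m.map Subtype.val ++ [y])) := by
      rwa [← List.append_assoc]
    rw [badP, List.pairwise_append] at hbad'
    have hy : y ∈ S := by
      intro a ha
      exact hbad'.2.2 a ha y (by simp)
    refine ⟨m ++ [⟨y, hy⟩], ⟨?_, ⟨y, hy⟩, rfl⟩, by rw [hinv]; simp⟩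
    exact bad_of_bad_map_val (by simpa [badP] using hbad'.2.1)

/-- Every ordinal below the rank of a node is realized as the rank of a descendant
(or the node itself). -/
theorem exists_node_rank {A : Type u} {r : A → A → Prop} :
    ∀ {a : A} (ha : Acc r a) {o : Ordinal.{u}}, o ≤ ha.rank →
      ∃ (b : A) (hb : Acc r b), hb.rank = o ∧ (b = a ∨ ∃ c, r b c) := by
  intro a ha
  induction ha with
  | intro a h IH =>
    intro o ho
    rcases eq_or_lt_of_le ho with heq | hlt
    · exact ⟨a, Acc.intro a h, heq.symm, Or.inl rfl⟩
    · rw [Acc.rank_eq, Ordinal.lt_iSup_iff] at hlt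
      obtain ⟨⟨b, hb⟩, hob⟩ := hlt
      rw [Order.lt_succ_iff] at hob
      have hob' : o ≤ (h b hb).rank :=
        hob.trans_eq (congrArg Acc.rank (Subsingleton.elim _ _))
      obtain ⟨c, hc, hrank, hor⟩ := IH b hb hob'
      refine ⟨c, hc, hrank, Or.inr ?_⟩
      rcases hor with rfl | ⟨d, hd⟩
      · exact ⟨a, hb⟩
      · exact ⟨d, hd⟩

theorem mot_of_isEmpty (Y : Type u) [Preorder Y] [IsEmpty Y] : mot Y = 0 := by
  have hacc : Acc (ExtRel (badP Y)) ([] : List Y) := by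
    constructor
    rintro t ⟨hP, a, rfl⟩
    exact isEmptyElim a
  haveI : IsEmpty {b : List Y // ExtRel (badP Y) b ([] : List Y)} :=
    ⟨fun b => by obtain ⟨t, ⟨hP, a, rfl⟩⟩ := b; exact isEmptyElim a⟩
  rw [mot_def, treeRank, dif_pos hacc, hacc.rank_eq, ciSup_of_empty]
  exact Ordinal.bot_eq_zero

theorem mot_univ (hX : IsWqo X) : mot ↥(Set.univ : Set X) = mot X :=
  mot_congr hX { toEquiv := Equiv.Set.univ X, map_rel_iff' := Iff.rfl }

/-- Subtype-of-subtype versus intersection. -/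
def setSetIso (P Q : Set X) : {z : ↥P // (z : X) ∈ Q} ≃o ↥(P ∩ Q) where
  toFun w := ⟨w.1.1, w.1.2, w.2⟩
  invFun u := ⟨⟨u.1, u.2.1⟩, u.2.2⟩
  left_inv w := rfl
  right_inv u := rfl
  map_rel_iff' := Iff.rfl

/-- Order isomorphism between a set of a subtype and its image. -/
noncomputable def valImageIso {T : Set X} (S : Set ↥T) : ↥S ≃o ↥(Subtype.val '' S) where
  toFun a := ⟨a.1.1, ⟨a.1, a.2, rfl⟩⟩
  invFun y := ⟨⟨y.1, by obtain ⟨a, -, ha⟩ := y.2; exact ha ▸ a.2⟩, by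
    obtain ⟨a, ha, heq⟩ := y.2
    exact Set.mem_of_eq_of_mem (Subtype.ext heq.symm) ha⟩
  left_inv a := Subtype.ext (Subtype.ext rfl)
  right_inv y := Subtype.ext rfl
  map_rel_iff' := Iff.rfl

theorem mot_image_val (hX : IsWqo X) {T : Set X} (S : Set ↥T) :
    mot ↥(Subtype.val '' S) = mot ↥S :=
  (mot_congr (isWqo_subtype hX (Subtype.val '' S)) (valImageIso S)).symm

/-- The ordered-sum lower bound: if no element of `Cᶜ` lies below an element of `C`,
then `mot C + mot Cᶜ ≤ mot X`. -/
theorem mot_add_le (hX : IsWqo X) (C : Set X)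
    (hcross : ∀ c ∈ C, ∀ d ∈ Cᶜ, ¬ d ≤ c) :
    mot ↥C + mot ↥(Cᶜ) ≤ mot X := by
  have hD : IsWqo ↥(Cᶜ) := isWqo_subtype hX _
  have hC : IsWqo ↥C := isWqo_subtype hX _
  have main : ∀ o : Ordinal.{u}, ∀ t : List ↥(Cᶜ), rk hD t = o → badP ↥(Cᶜ) t →
      mot ↥C + rk hD t ≤ rk hX (t.map Subtype.val) := by
    intro o
    induction o using Ordinal.induction with
    | _ o IH =>
    intro t hto ht
    have htX : badP X (t.map Subtype.val) := bad_map_val ht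
    have base : mot ↥C ≤ rk hX (t.map Subtype.val) := by
      rw [mot_eq_rk hC, rk, rk]
      refine rank_le_of_sim
        (fun (m : List ↥C) (l : List X) => l = t.map Subtype.val ++ m.map Subtype.val) ?_
        (acc_bad_of_wqo hX (t.map Subtype.val)) (acc_bad_of_wqo hC []) (by simp)
      rintro m l hinv m' ⟨hbad, x, rfl⟩
      refine ⟨t.map Subtype.val ++ (m ++ [x]).map Subtype.val,
        ⟨?_, x.val, by rw [hinv]; simp⟩, rfl⟩
      rw [badP, List.pairwise_append]
      refine ⟨htX, bad_map_val hbad, ?_⟩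
      rintro a ha b hb
      rw [List.mem_map] at ha hb
      obtain ⟨za, hza, rfl⟩ := ha
      obtain ⟨zb, hzb, rfl⟩ := hb
      exact hcross zb.val zb.2 za.val za.2
    apply le_of_forall_lt
    intro z hz
    rcases lt_or_ge z (mot ↥C) with h | h
    · exact h.trans_le base
    · have hze : mot ↥C + (z - mot ↥C) = z := Ordinal.add_sub_cancel_of_le h
      have hw : z - mot ↥C < rk hD t := by
        rw [← hze, add_lt_add_iff_left] at hz
        exact hz
      rw [rk_eq hD t, Ordinal.lt_iSup_iff] at hw
      obtain ⟨⟨t', hrel⟩, hw⟩ := hw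
      rw [Order.lt_succ_iff] at hw
      obtain ⟨hbad', x, rfl⟩ := hrel
      have hchild : rk hX ((t ++ [x]).map Subtype.val) < rk hX (t.map Subtype.val) :=
        rk_lt hX ⟨bad_map_val hbad', x.val, by simp⟩
      have hIH := IH (rk hD (t ++ [x])) (by rw [← hto]; exact rk_lt hD ⟨hbad', x, rfl⟩)
        (t ++ [x]) rfl hbad'
      calc z = mot ↥C + (z - mot ↥C) := hze.symm
        _ ≤ mot ↥C + rk hD (t ++ [x]) := add_le_add_right hw _
        _ ≤ rk hX ((t ++ [x]).map Subtype.val) := hIH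
        _ < rk hX (t.map Subtype.val) := hchild
  have hmain := main (rk hD []) [] rfl badP_nil
  rw [mot_eq_rk hX, mot_eq_rk hD]
  simpa using hmain

/-- The natural-sum upper bound over an arbitrary partition. -/
theorem mot_le_nadd (hX : IsWqo X) (C : Set X) :
    mot X ≤ mot ↥C ♯ mot ↥(Cᶜ) := by
  classical
  have hC : IsWqo ↥C := isWqo_subtype hX _
  have hD : IsWqo ↥(Cᶜ) := isWqo_subtype hX _
  set fC : X → Option ↥C := fun x => if h : x ∈ C then some ⟨x, h⟩ else none with hfC
  set fD : X → Option ↥(Cᶜ) := fun x => if h : x ∈ Cᶜ then some ⟨x, h⟩ else none with hfD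
  have hfCx : ∀ (x : X) (h : x ∈ C), fC x = some ⟨x, h⟩ := by
    intro x h; simp only [hfC]; rw [dif_pos h]
  have hfCn : ∀ x : X, x ∉ C → fC x = none := by
    intro x h; simp only [hfC]; rw [dif_neg h]
  have hfDx : ∀ (x : X) (h : x ∈ Cᶜ), fD x = some ⟨x, h⟩ := by
    intro x h; simp only [hfD]; rw [dif_pos h]
  have hfDn : ∀ x : X, x ∉ Cᶜ → fD x = none := by
    intro x h; simp only [hfD]; rw [dif_neg h]
  have badC : ∀ {l : List X}, badP X l → badP ↥C (l.filterMap fC) := by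
    intro l hl
    refine List.Pairwise.filterMap _ (fun a a' h b hb b' hb' => ?_) hl
    by_cases ha : a ∈ C
    · by_cases ha' : a' ∈ C
      · rw [hfCx a ha, Option.some_inj] at hb
        rw [hfCx a' ha', Option.some_inj] at hb'
        subst hb; subst hb'
        exact h
      · rw [hfCn a' ha'] at hb'
        exact absurd hb' (by simp)
    · rw [hfCn a ha] at hb
      exact absurd hb (by simp)
  have badD : ∀ {l : List X}, badP X l → badP ↥(Cᶜ) (l.filterMap fD) := by
    intro l hl
    refine List.Pairwise.filterMap _ (fun a a' h b hb b' hb' => ?_) hl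
    by_cases ha : a ∈ Cᶜ
    · by_cases ha' : a' ∈ Cᶜ
      · rw [hfDx a ha, Option.some_inj] at hb
        rw [hfDx a' ha', Option.some_inj] at hb'
        subst hb; subst hb'
        exact h
      · rw [hfDn a' ha'] at hb'
        exact absurd hb' (by simp)
    · rw [hfDn a ha] at hb
      exact absurd hb (by simp)
  have main : ∀ o : Ordinal.{u}, ∀ t : List X, rk hX t = o → badP X t →
      rk hX t ≤ rk hC (t.filterMap fC) ♯ rk hD (t.filterMap fD) := by
    intro o
    induction o using Ordinal.induction with
    | _ o IH =>
    intro t hto ht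
    rw [rk_eq hX t]
    apply Ordinal.iSup_le_iff.2
    rintro ⟨t', hbad', x, rfl⟩
    apply Order.succ_le_of_lt
    have hIH := IH (rk hX (t ++ [x])) (by rw [← hto]; exact rk_lt hX ⟨hbad', x, rfl⟩)
      (t ++ [x]) rfl hbad'
    rcases Classical.em (x ∈ C) with hx | hx
    · have hxd : x ∉ Cᶜ := fun hc => hc hx
      have e1 : (t ++ [x]).filterMap fC = t.filterMap fC ++ [⟨x, hx⟩] := by
        rw [List.filterMap_append]
        simp [hfCx x hx]
      have e2 : (t ++ [x]).filterMap fD = t.filterMap fD := by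
        rw [List.filterMap_append]
        simp [hfDn x hxd]
      have hcl : rk hC ((t ++ [x]).filterMap fC) < rk hC (t.filterMap fC) := by
        rw [e1]
        refine rk_lt hC ⟨?_, ⟨x, hx⟩, rfl⟩
        rw [← e1]
        exact badC hbad'
      calc rk hX (t ++ [x]) ≤ rk hC ((t ++ [x]).filterMap fC) ♯ rk hD ((t ++ [x]).filterMap fD) := hIH
        _ = rk hC ((t ++ [x]).filterMap fC) ♯ rk hD (t.filterMap fD) := by rw [e2]
        _ < rk hC (t.filterMap fC) ♯ rk hD (t.filterMap fD) := Ordinal.nadd_lt_nadd_right hcl _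
    · have hx' : x ∈ Cᶜ := hx
      have e1 : (t ++ [x]).filterMap fD = t.filterMap fD ++ [⟨x, hx'⟩] := by
        rw [List.filterMap_append]
        simp [hfDx x hx']
      have e2 : (t ++ [x]).filterMap fC = t.filterMap fC := by
        rw [List.filterMap_append]
        simp [hfCn x hx]
      have hdl : rk hD ((t ++ [x]).filterMap fD) < rk hD (t.filterMap fD) := by
        rw [e1]
        refine rk_lt hD ⟨?_, ⟨x, hx'⟩, rfl⟩
        rw [← e1]
        exact badD hbad'
      calc rk hX (t ++ [x]) ≤ rk hC ((t ++ [x]).filterMap fC) ♯ rk hD ((t ++ [x]).filterMap fD) := hIH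
        _ = rk hC (t.filterMap fC) ♯ rk hD ((t ++ [x]).filterMap fD) := by rw [e2]
        _ < rk hC (t.filterMap fC) ♯ rk hD (t.filterMap fD) := Ordinal.nadd_lt_nadd_left hdl _
  have hmain := main (rk hX []) [] rfl badP_nil
  rw [mot_eq_rk hX, mot_eq_rk hC, mot_eq_rk hD]
  simpa using hmain

end SandwichAux






namespace SandwichAux

open NaturalOps

/-- Key merging bound for natural sums against Cantor-style decompositions. -/
theorem merge_le {e : Ordinal.{u}}
    (H : ∀ x y : Ordinal.{u}, x < ω ^ e → y < ω ^ e → x ♯ y < ω ^ e) :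
    ∀ u v i j r s : Ordinal.{u}, r < ω ^ e → s < ω ^ e → i ♯ j ≤ u → r ♯ s ≤ v →
      (ω ^ e * i + r) ♯ (ω ^ e * j + s) ≤ ω ^ e * (i ♯ j) + (r ♯ s) := by
  have hne : (ω : Ordinal) ^ e ≠ 0 := Ordinal.opow_ne_zero e Ordinal.omega0_ne_zero
  intro u
  induction u using Ordinal.induction with
  | _ u IHu =>
  intro v
  induction v using Ordinal.induction with
  | _ v IHv =>
  intro i j r s hr hs hu hv
  have sym : ∀ i j r s : Ordinal.{u}, r < ω ^ e → s < ω ^ e → i ♯ j ≤ u → r ♯ s ≤ v →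
      ∀ x < ω ^ e * i + r, x ♯ (ω ^ e * j + s) < ω ^ e * (i ♯ j) + (r ♯ s) := by
    intro i j r s hr hs hu hv x hx
    rcases lt_or_ge x (ω ^ e * i) with h | h
    · have hxd : ω ^ e * (x / ω ^ e) + x % ω ^ e = x := Ordinal.div_add_mod x (ω ^ e)
      have hi' : x / ω ^ e < i := (Ordinal.div_lt hne).2 h
      have hrm : x % ω ^ e < ω ^ e := Ordinal.mod_lt x hne
      have hlt : (x / ω ^ e) ♯ j < i ♯ j := Ordinal.nadd_lt_nadd_right hi' j
      have h1 : x ♯ (ω ^ e * j + s) ≤ ω ^ e * ((x / ω ^ e) ♯ j) + ((x % ω ^ e) ♯ s) := by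
        conv_lhs => rw [← hxd]
        exact IHu _ (hlt.trans_le hu) _ _ _ _ _ hrm hs le_rfl le_rfl
      have h2 : ω ^ e * ((x / ω ^ e) ♯ j) + ((x % ω ^ e) ♯ s)
          < ω ^ e * ((x / ω ^ e) ♯ j) + ω ^ e := add_lt_add_right (H _ _ hrm hs) _
      have h3 : ω ^ e * ((x / ω ^ e) ♯ j) + ω ^ e = ω ^ e * Order.succ ((x / ω ^ e) ♯ j) :=
        (Ordinal.mul_succ _ _).symm
      have h4 : ω ^ e * Order.succ ((x / ω ^ e) ♯ j) ≤ ω ^ e * (i ♯ j) :=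
        mul_le_mul_right (Order.succ_le_of_lt hlt) _
      calc x ♯ (ω ^ e * j + s) ≤ ω ^ e * ((x / ω ^ e) ♯ j) + ((x % ω ^ e) ♯ s) := h1
        _ < ω ^ e * Order.succ ((x / ω ^ e) ♯ j) := h3 ▸ h2
        _ ≤ ω ^ e * (i ♯ j) := h4
        _ ≤ ω ^ e * (i ♯ j) + (r ♯ s) := le_self_add
    · have hxe : ω ^ e * i + (x - ω ^ e * i) = x := Ordinal.add_sub_cancel_of_le h
      have hr' : x - ω ^ e * i < r := by
        have := hx
        rw [← hxe, add_lt_add_iff_left] at this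
        exact this
      have hr'e : x - ω ^ e * i < ω ^ e := hr'.trans hr
      have h1 : x ♯ (ω ^ e * j + s) ≤ ω ^ e * (i ♯ j) + ((x - ω ^ e * i) ♯ s) := by
        conv_lhs => rw [← hxe]
        exact IHv _ ((Ordinal.nadd_lt_nadd_right hr' s).trans_le hv) _ _ _ _ hr'e hs hu le_rfl
      exact h1.trans_lt (add_lt_add_right (Ordinal.nadd_lt_nadd_right hr' s) _)
  rw [Ordinal.nadd_le_iff]
  constructor
  · exact fun x hx => sym i j r s hr hs hu hv x hx
  · intro y hy
    rw [Ordinal.nadd_comm]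
    have := sym j i s r hs hr ((Ordinal.nadd_comm j i).le.trans hu)
      ((Ordinal.nadd_comm s r).le.trans hv) y hy
    rwa [Ordinal.nadd_comm j i, Ordinal.nadd_comm s r] at this

/-- Powers of `ω` are closed under natural addition. -/
theorem nadd_lt_opow : ∀ e : Ordinal.{u}, ∀ a b : Ordinal.{u},
    a < ω ^ e → b < ω ^ e → a ♯ b < ω ^ e := by
  intro e
  induction e using Ordinal.induction with
  | _ e IH =>
  intro a b ha hb
  rcases eq_or_ne e 0 with rfl | he
  · rw [opow_zero] at ha hb ⊢
    rw [Ordinal.lt_one_iff_zero] at ha hb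
    subst ha; subst hb
    simpa [Ordinal.nadd_zero] using (zero_lt_one : (0 : Ordinal.{u}) < 1)
  rcases eq_or_ne a 0 with rfl | ha0
  · rwa [Ordinal.zero_nadd]
  rcases eq_or_ne b 0 with rfl | hb0
  · rwa [Ordinal.nadd_zero]
  set c := max (Ordinal.log ω a) (Ordinal.log ω b) with hcdef
  have hce : c < e := by
    apply max_lt
    · exact (Ordinal.lt_opow_iff_log_lt Ordinal.one_lt_omega0 ha0).1 ha
    · exact (Ordinal.lt_opow_iff_log_lt Ordinal.one_lt_omega0 hb0).1 hb
  have hne : (ω : Ordinal) ^ c ≠ 0 := Ordinal.opow_ne_zero c Ordinal.omega0_ne_zero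
  have hae : a < ω ^ c * ω := by
    rw [← Ordinal.opow_succ]
    exact (Ordinal.lt_opow_succ_log_self Ordinal.one_lt_omega0 a).trans_le
      (Ordinal.opow_le_opow_right Ordinal.omega0_pos (Order.succ_le_succ (le_max_left _ _)))
  have hbe : b < ω ^ c * ω := by
    rw [← Ordinal.opow_succ]
    exact (Ordinal.lt_opow_succ_log_self Ordinal.one_lt_omega0 b).trans_le
      (Ordinal.opow_le_opow_right Ordinal.omega0_pos (Order.succ_le_succ (le_max_right _ _)))
  obtain ⟨m, hm, ham⟩ := (Ordinal.lt_mul_iff_of_isSuccLimit Ordinal.isSuccLimit_omega0).1 hae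
  obtain ⟨n, hn, hbn⟩ := (Ordinal.lt_mul_iff_of_isSuccLimit Ordinal.isSuccLimit_omega0).1 hbe
  have hia : a / ω ^ c < ω := ((Ordinal.div_lt hne).2 ham).trans hm
  have hjb : b / ω ^ c < ω := ((Ordinal.div_lt hne).2 hbn).trans hn
  have hfin : (a / ω ^ c) ♯ (b / ω ^ c) < ω := by
    obtain ⟨mi, hmi⟩ := Ordinal.lt_omega0.1 hia
    obtain ⟨nj, hnj⟩ := Ordinal.lt_omega0.1 hjb
    rw [hmi, hnj, Ordinal.nadd_nat]
    rw [← Nat.cast_add]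
    exact Ordinal.natCast_lt_omega0 _
  have hra : a % ω ^ c < ω ^ c := Ordinal.mod_lt a hne
  have hrb : b % ω ^ c < ω ^ c := Ordinal.mod_lt b hne
  have key := merge_le (fun x y hx hy => IH c hce x y hx hy)
    ((a / ω ^ c) ♯ (b / ω ^ c)) ((a % ω ^ c) ♯ (b % ω ^ c))
    (a / ω ^ c) (b / ω ^ c) (a % ω ^ c) (b % ω ^ c) hra hrb le_rfl le_rfl
  rw [Ordinal.div_add_mod, Ordinal.div_add_mod] at key
  calc a ♯ b ≤ ω ^ c * ((a / ω ^ c) ♯ (b / ω ^ c)) + ((a % ω ^ c) ♯ (b % ω ^ c)) := key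
    _ < ω ^ c * ((a / ω ^ c) ♯ (b / ω ^ c)) + ω ^ c := add_lt_add_right (IH c hce _ _ hra hrb) _
    _ = ω ^ c * Order.succ ((a / ω ^ c) ♯ (b / ω ^ c)) := (Ordinal.mul_succ _ _).symm
    _ < ω ^ c * ω := mul_lt_mul_of_pos_left
        (Ordinal.isSuccLimit_omega0.succ_lt hfin) (Ordinal.opow_pos c Ordinal.omega0_pos)
    _ = ω ^ Order.succ c := (Ordinal.opow_succ ω c).symm
    _ ≤ ω ^ e := Ordinal.opow_le_opow_right Ordinal.omega0_pos (Order.succ_le_of_lt hce)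

theorem nadd_lt_add_opow {γ e : Ordinal.{u}} (hγ : γ < ω ^ e) (α : Ordinal.{u}) :
    α ♯ γ < α + ω ^ e := by
  have hne : (ω : Ordinal) ^ e ≠ 0 := Ordinal.opow_ne_zero e Ordinal.omega0_ne_zero
  have hd : ω ^ e * (α / ω ^ e) + α % ω ^ e = α := Ordinal.div_add_mod α (ω ^ e)
  have hm : α % ω ^ e < ω ^ e := Ordinal.mod_lt α hne
  have key := merge_le (nadd_lt_opow e) ((α / ω ^ e) ♯ (0 : Ordinal))
    ((α % ω ^ e) ♯ γ) (α / ω ^ e) 0 (α % ω ^ e) γ hm hγ le_rfl le_rfl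
  rw [hd, mul_zero, zero_add, Ordinal.nadd_zero] at key
  calc α ♯ γ ≤ ω ^ e * (α / ω ^ e) + ((α % ω ^ e) ♯ γ) := key
    _ < ω ^ e * (α / ω ^ e) + ω ^ e := add_lt_add_right (nadd_lt_opow e _ _ hm hγ) _
    _ = α + ω ^ e := by
        conv_rhs => rw [← hd, add_assoc, Ordinal.add_omega0_opow hm]

end SandwichAux

namespace SandwichAux

open NaturalOps

theorem sandwich_aux : ∀ (β : Ordinal.{u}) (X : Type u) [Preorder X], IsWqo X →
    ∀ α : Ordinal.{u}, mot X = α + β →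
      ∃ S : Set X, mot ↥S = α ∧ mot ↥(Sᶜ) = β ∧ ∀ a ∈ S, ∀ b ∈ Sᶜ, ¬ b ≤ a := by
  intro β
  induction β using Ordinal.induction with
  | _ β IH =>
  intro X instX hX α hmot
  rcases eq_or_ne β 0 with rfl | hβ0
  · refine ⟨Set.univ, ?_, ?_, ?_⟩
    · rw [mot_univ hX, hmot, add_zero]
    · rw [Set.compl_univ]
      haveI : IsEmpty ↥(∅ : Set X) := Set.isEmpty_coe_sort.2 rfl
      exact mot_of_isEmpty _
    · intro a _ b hb
      rw [Set.compl_univ] at hb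
      exact absurd hb (Set.notMem_empty b)
  by_cases hdec : ∃ γ δ : Ordinal.{u}, γ ≠ 0 ∧ δ ≠ 0 ∧ γ < β ∧ δ < β ∧ γ + δ = β
  · -- decomposable case
    obtain ⟨γ, δ, hγ0, hδ0, hγβ, hδβ, hγδ⟩ := hdec
    obtain ⟨T, hT, hTc, crossT⟩ := IH δ hδβ X hX (α + γ) (by rw [hmot, ← hγδ, ← add_assoc])
    have hTw : IsWqo ↥T := isWqo_subtype hX T
    obtain ⟨S₂, hS₂, hS₂c, crossS₂⟩ := IH γ hγβ ↥T hTw α hT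
    set S : Set X := Subtype.val '' S₂ with hSdef
    have hST : S ⊆ T := by rintro x ⟨a, -, rfl⟩; exact a.2
    have hmotS : mot ↥S = α := by rw [hSdef, mot_image_val hX S₂, hS₂]
    have crossF : ∀ a ∈ S, ∀ b ∈ Sᶜ, ¬ b ≤ a := by
      rintro a ⟨a₂, ha₂, rfl⟩ b hb hba
      by_cases hbT : b ∈ T
      · have hb₂ : (⟨b, hbT⟩ : ↥T) ∈ S₂ᶜ := fun hmem => hb ⟨⟨b, hbT⟩, hmem, rfl⟩
        exact crossS₂ a₂ ha₂ ⟨b, hbT⟩ hb₂ hba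
      · exact crossT a₂.val a₂.2 b hbT hba
    have hcompl_inter_T : Sᶜ ∩ T = Subtype.val '' (S₂ᶜ) := by
      ext x
      constructor
      · rintro ⟨hxS, hxT⟩
        exact ⟨⟨x, hxT⟩, fun hmem => hxS ⟨⟨x, hxT⟩, hmem, rfl⟩, rfl⟩
      · rintro ⟨a, ha, rfl⟩
        refine ⟨?_, a.2⟩
        rintro ⟨a', ha', heq⟩
        exact ha (Set.mem_of_eq_of_mem (Subtype.ext heq.symm) ha')
    have hcompl_inter_Tc : Sᶜ ∩ Tᶜ = Tᶜ :=
      Set.inter_eq_right.2 (Set.compl_subset_compl.2 hST)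
    have hZw : IsWqo ↥(Sᶜ) := isWqo_subtype hX _
    set CZ : Set ↥(Sᶜ) := {z : ↥(Sᶜ) | (z : X) ∈ T} with hCZ
    have e1 : mot ↥CZ = γ := by
      calc mot ↥CZ = mot ↥(Sᶜ ∩ T) :=
            mot_congr (isWqo_subtype hX (Sᶜ ∩ T)) (setSetIso (Sᶜ) T)
        _ = mot ↥(Subtype.val '' (S₂ᶜ)) := by rw [hcompl_inter_T]
        _ = mot ↥(S₂ᶜ) := mot_image_val hX _
        _ = γ := hS₂c
    have e2 : mot ↥(CZᶜ) = δ := by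
      calc mot ↥(CZᶜ) = mot ↥(Sᶜ ∩ Tᶜ) :=
            mot_congr (isWqo_subtype hX (Sᶜ ∩ Tᶜ)) (setSetIso (Sᶜ) (Tᶜ))
        _ = mot ↥(Tᶜ) := by rw [hcompl_inter_Tc]
        _ = δ := hTc
    have crossZ : ∀ c ∈ CZ, ∀ d ∈ CZᶜ, ¬ d ≤ c := by
      intro c hc d hd hdc
      exact crossT c.val hc d.val hd hdc
    have lower : γ + δ ≤ mot ↥(Sᶜ) := by
      have h0 := mot_add_le hZw CZ crossZ
      rwa [e1, e2] at h0
    have upper : mot ↥(Sᶜ) ≤ γ + δ := by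
      have h1 := mot_add_le hX S crossF
      rw [hmotS, hmot, ← hγδ] at h1
      exact (add_le_add_iff_left α).1 h1
    exact ⟨S, hmotS, by rw [← hγδ]; exact le_antisymm upper lower, crossF⟩
  · -- principal case
    have hprin : Ordinal.Principal (· + ·) β := by
      intro x y hx hy
      by_contra hxy
      push_neg at hxy
      apply hdec
      have hx0 : x ≠ 0 := by
        rintro rfl
        rw [zero_add] at hxy
        exact absurd hy (not_lt.2 hxy)
      refine ⟨x, β - x, hx0, ?_, hx, ?_, Ordinal.add_sub_cancel_of_le hx.le⟩
      · rw [Ne, Ordinal.sub_eq_zero_iff_le]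
        exact not_le.2 hx
      · have h1 : x + (β - x) ≤ x + y := by
          rw [Ordinal.add_sub_cancel_of_le hx.le]; exact hxy
        exact ((add_le_add_iff_left x).1 h1).trans_lt hy
    obtain ⟨e, hbe⟩ : ∃ e : Ordinal.{u}, β = ω ^ e := by
      rcases Ordinal.principal_add_iff_zero_or_omega0_opow.1 hprin with h0 | ⟨e, he⟩
      · exact absurd h0 hβ0
      · exact ⟨e, he.symm⟩
    have hαβ : α < mot X := by
      rw [hmot]
      have h0 : (0 : Ordinal) < β := pos_iff_ne_zero.2 hβ0
      simpa using add_lt_add_right h0 α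
    have hle : α ≤ rk hX ([] : List X) := by
      rw [← mot_eq_rk hX]; exact hαβ.le
    obtain ⟨s, hsacc, hsrank, hsor⟩ :=
      exists_node_rank (acc_bad_of_wqo hX ([] : List X)) (o := α) hle
    have hsbad : badP X s := by
      rcases hsor with rfl | ⟨c, hc⟩
      · exact badP_nil
      · exact hc.1
    have hrks : rk hX s = α := by
      rw [rk, congrArg Acc.rank (Subsingleton.elim (acc_bad_of_wqo hX s) hsacc)]
      exact hsrank
    set S : Set X := {x : X | ∀ a ∈ s, ¬ a ≤ x} with hSdef
    have hmotS : mot ↥S = α := by rw [hSdef, rank_node hX hsbad]; exact hrks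
    have crossF : ∀ a ∈ S, ∀ b ∈ Sᶜ, ¬ b ≤ a := by
      intro a ha b hb hba
      apply hb
      intro c hc hcb
      exact ha c hc (hcb.trans hba)
    have upper : mot ↥(Sᶜ) ≤ β := by
      have h1 := mot_add_le hX S crossF
      rw [hmotS, hmot] at h1
      exact (add_le_add_iff_left α).1 h1
    have lower : β ≤ mot ↥(Sᶜ) := by
      by_contra hlt
      push_neg at hlt
      have h2 := mot_le_nadd hX S
      rw [hmotS, hmot] at h2
      have h3 : α ♯ mot ↥(Sᶜ) < α + β := by
        rw [hbe] at hlt ⊢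
        exact nadd_lt_add_opow hlt α
      exact absurd (h2.trans_lt h3) (lt_irrefl _)
    exact ⟨S, hmotS, le_antisymm upper lower, crossF⟩

end SandwichAux

/-- The Sandwich Lemma: if `o(A) = α + β` then `A` splits into a partition
`A = A_α ⊎ A_β` with `o(A_α) = α`, `o(A_β) = β`, and no element of `A_β` below an
element of `A_α`. -/
theorem sandwich_lemma (A : Type u) [Preorder A] (hA : IsWqo A) (α β : Ordinal.{u})
    (h : mot A = α + β) :
    ∃ S : Set A, mot ↥S = α ∧ mot ↥(Sᶜ) = β ∧
      ∀ a ∈ S, ∀ b ∈ Sᶜ, ¬ b ≤ a := by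
  exact SandwichAux.sandwich_aux β A hA α h
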